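/- Let z > 2 be real. Let S be the subsemigroup of M_2(𝕋_{[1,z]}) consisting of all matrices of the form [[0, a],[-∞, b]] with a, b ∈ 𝕋_{[1,z]}, and S' the subsemigroup of all matrices of the form [[0, -∞],[a, b]] with a, b ∈ 𝕋_{[1,z]}. Then S and S' are both (2⌈z⌉+5)-permutable. -/

import Mathlib

set_option maxHeartbeats 1000000

universe u

/-! ### Semiring classes.

A *semiring* here is a nonempty set with an associative commutative addition and an
associative multiplication which distributes over addition on both sides; no zero or
identity element is assumed. -/

class PlainSemiring (S : Type u) extends Add S, Mul S where
  nonempty' : Nonempty S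
  add_assoc' : ∀ a b c : S, a + b + c = a + (b + c)
  add_comm' : ∀ a b : S, a + b = b + a
  mul_assoc' : ∀ a b c : S, a * b * c = a * (b * c)
  left_distrib' : ∀ a b c : S, a * (b + c) = a * b + a * c
  right_distrib' : ∀ a b c : S, (a + b) * c = a * c + b * c

/-- A bipotent semiring: `x + y` is always either `x` or `y`.
(The induced total order is given by `x ≤ y ↔ x + y = y`.) -/
class BipotentSemiring (S : Type u) extends PlainSemiring S where
  bipotent : ∀ a b : S, a + b = a ∨ a + b = b

/-- A commutative bipotent semiring. -/
class CommBipotentSemiring (S : Type u) extends BipotentSemiring S where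
  mul_comm' : ∀ a b : S, a * b = b * a

/-- `mpow a n` is the `(n+1)`-st power of `a`, so the set of positive powers of `a`
is exactly `Set.range (mpow a)`, and the multiplicative order of `a` is the
cardinality of `Set.range (mpow a)`. -/
def mpow {S : Type*} [Mul S] (a : S) : ℕ → S
  | 0 => a
  | n + 1 => mpow a n * a

lemma mpow_mul_mpow {S : Type*} [PlainSemiring S] (a : S) (m n : ℕ) :
    mpow a m * mpow a n = mpow a (m + n + 1) := by
  induction n with
  | zero => rfl
  | succ n ih =>
    show mpow a m * (mpow a n * a) = mpow a (m + n + 1) * a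
    rw [← PlainSemiring.mul_assoc', ih]

/-! ### Products of finite families, and permutability. -/

/-- Fold step used to define sums/products of possibly empty families in a structure
with no neutral element; the overall fold is `none` iff the family is empty. -/
def optStep {S : Type*} (op : S → S → S) : Option S → S → Option S :=
  fun acc x => some (acc.elim x (fun a => op a x))

/-- The sum `s 0 + s 1 + ⋯` of a finite family, as an `Option` (`none` iff `k = 0`). -/
def finSum {S : Type*} [Add S] {k : ℕ} (s : Fin k → S) : Option S :=
  (List.ofFn s).foldl (optStep (· + ·)) none

/-- The product `s 0 * s 1 * ⋯` of a finite family, as an `Option` (`none` iff `k = 0`). -/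
def finProd {S : Type*} [Mul S] {k : ℕ} (s : Fin k → S) : Option S :=
  (List.ofFn s).foldl (optStep (· * ·)) none

/-- A multiplicative structure is `k`-permutable if every product of `k` elements is
preserved by some non-identity permutation of its factors. -/
def KPermutable (S : Type*) [Mul S] (k : ℕ) : Prop :=
  ∀ s : Fin k → S, ∃ σ : Equiv.Perm (Fin k), σ ≠ Equiv.refl (Fin k) ∧
    finProd (fun i => s (σ i)) = finProd s

/-- A semigroup is strongly permutable if it is `k`-permutable for some `k ≥ 2`. -/
def StronglyPermutable (S : Type*) [Mul S] : Prop :=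
  ∃ k : ℕ, 2 ≤ k ∧ KPermutable S k

/-- A semigroup is weakly permutable if for some `k ≥ 2`, any product of `k` elements
is computed identically by two distinct permutations of its factors. -/
def WeaklyPermutable (S : Type*) [Mul S] : Prop :=
  ∃ k : ℕ, 2 ≤ k ∧ ∀ s : Fin k → S, ∃ σ τ : Equiv.Perm (Fin k), σ ≠ τ ∧
    finProd (fun i => s (σ i)) = finProd (fun i => s (τ i))

/-- Isomorphism of semirings (bijection preserving addition and multiplication). -/
def RingLikeIso (S T : Type*) [Add S] [Mul S] [Add T] [Mul T] : Prop :=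
  ∃ f : S → T, Function.Bijective f ∧ (∀ a b : S, f (a + b) = f a + f b) ∧
    (∀ a b : S, f (a * b) = f a * f b)

/-! ### Matrices. -/

/-- Square `n × n` matrices over `S`. -/
def MatSR (S : Type u) (n : ℕ) : Type u := Fin n → Fin n → S

/-- Matrix multiplication, `(A*B) i j = Σ_k (A i k * B k j)`.  (For `n ≥ 1` — the only
case of interest — the `getD` default value is never used.) -/
def matMul {S : Type*} [Add S] [Mul S] {n : ℕ} (A B : MatSR S n) : MatSR S n :=
  fun i j => (finSum (fun k : Fin n => A i k * B k j)).getD (A i j * B i j)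

/-- The multiplicative semigroup `M_n(S)`. -/
instance {S : Type*} [Add S] [Mul S] {n : ℕ} : Mul (MatSR S n) := ⟨matMul⟩

/-! ### `S⁰`: adjoining a zero, and upper triangular matrices. -/

/-- `S` with a zero (additively neutral, multiplicatively absorbing) element adjoined. -/
inductive Adj0 (S : Type u) : Type u
  | zero : Adj0 S
  | elem : S → Adj0 S

namespace Adj0

def add' {S : Type*} [Add S] : Adj0 S → Adj0 S → Adj0 S
  | .zero, b => b
  | .elem a, .zero => .elem a
  | .elem a, .elem b => .elem (a + b)

def mul' {S : Type*} [Mul S] : Adj0 S → Adj0 S → Adj0 S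
  | .zero, _ => .zero
  | .elem _, .zero => .zero
  | .elem a, .elem b => .elem (a * b)

instance {S : Type*} [Add S] : Add (Adj0 S) := ⟨add'⟩
instance {S : Type*} [Mul S] : Mul (Adj0 S) := ⟨mul'⟩

@[simp] lemma zero_add {S : Type*} [Add S] (b : Adj0 S) : (zero : Adj0 S) + b = b := rfl
@[simp] lemma add_zero {S : Type*} [Add S] (a : Adj0 S) : a + (zero : Adj0 S) = a := by
  cases a <;> rfl
@[simp] lemma elem_add_elem {S : Type*} [Add S] (a b : S) :
    (elem a : Adj0 S) + elem b = elem (a + b) := rfl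
@[simp] lemma zero_mul {S : Type*} [Mul S] (b : Adj0 S) : (zero : Adj0 S) * b = zero := rfl
@[simp] lemma mul_zero {S : Type*} [Mul S] (a : Adj0 S) : a * (zero : Adj0 S) = zero := by
  cases a <;> rfl
@[simp] lemma elem_mul_elem {S : Type*} [Mul S] (a b : S) :
    (elem a : Adj0 S) * elem b = elem (a * b) := rfl

lemma add_eq_zero_iff {S : Type*} [Add S] (a b : Adj0 S) :
    a + b = zero ↔ a = zero ∧ b = zero := by
  cases a <;> cases b <;> simp

end Adj0

lemma foldl_optStep_adj0 {S : Type*} [Add S] (l : List (Adj0 S)) (a : Adj0 S) :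
    ∃ c : Adj0 S, l.foldl (optStep (· + ·)) (some a) = some c ∧
      (c = Adj0.zero ↔ a = Adj0.zero ∧ ∀ x ∈ l, x = Adj0.zero) := by
  induction l generalizing a with
  | nil => exact ⟨a, rfl, by simp⟩
  | cons x l ih =>
    obtain ⟨c, hc, hiff⟩ := ih (a + x)
    refine ⟨c, ?_, ?_⟩
    · simpa [optStep] using hc
    · rw [hiff, Adj0.add_eq_zero_iff]
      simp only [List.mem_cons, forall_eq_or_imp]
      tauto

lemma finSum_adj0_eq_zero {S : Type*} [Add S] {n : ℕ} (f : Fin n → Adj0 S) (i : Fin n)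
    (d : Adj0 S) (h : ∀ k, f k = Adj0.zero) : (finSum f).getD d = Adj0.zero := by
  cases n with
  | zero => exact i.elim0
  | succ m =>
    rw [finSum, List.ofFn_succ, List.foldl_cons]
    obtain ⟨c, hc, hiff⟩ := foldl_optStep_adj0 (List.ofFn fun i : Fin m => f i.succ) (f 0)
    rw [show optStep (· + ·) none (f 0) = some (f 0) from rfl, hc]
    have : c = Adj0.zero := hiff.mpr ⟨h 0, by
      intro x hx
      rw [List.mem_ofFn] at hx
      obtain ⟨j, rfl⟩ := hx
      exact h _⟩
    simp [this]

lemma finSum_adj0_ne_zero {S : Type*} [Add S] {n : ℕ} (f : Fin n → Adj0 S) (i : Fin n)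
    (d : Adj0 S) (h : f i ≠ Adj0.zero) : (finSum f).getD d ≠ Adj0.zero := by
  cases n with
  | zero => exact i.elim0
  | succ m =>
    rw [finSum, List.ofFn_succ, List.foldl_cons]
    obtain ⟨c, hc, hiff⟩ := foldl_optStep_adj0 (List.ofFn fun i : Fin m => f i.succ) (f 0)
    rw [show optStep (· + ·) none (f 0) = some (f 0) from rfl, hc]
    simp only [Option.getD_some]
    intro hcz
    obtain ⟨h0, hall⟩ := hiff.mp hcz
    induction i using Fin.cases with
    | zero => exact h h0
    | succ j => exact h (hall _ (List.mem_ofFn.mpr ⟨j, rfl⟩))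

/-- Upper-triangularity over `S⁰`: entries strictly below the diagonal are the
adjoined zero; entries on and above the diagonal lie in `S`. -/
def IsUT {S : Type*} {n : ℕ} (A : MatSR (Adj0 S) n) : Prop :=
  (∀ i j : Fin n, (j : ℕ) < (i : ℕ) → A i j = Adj0.zero) ∧
  (∀ i j : Fin n, (i : ℕ) ≤ (j : ℕ) → ∃ s : S, A i j = Adj0.elem s)

lemma IsUT.mul {S : Type*} [Add S] [Mul S] {n : ℕ} {A B : MatSR (Adj0 S) n}
    (hA : IsUT A) (hB : IsUT B) : IsUT (matMul A B) := by
  constructor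
  · intro i j hji
    apply finSum_adj0_eq_zero _ i
    intro k
    rcases le_or_gt (i : ℕ) (k : ℕ) with h | h
    · rw [hB.1 k j (lt_of_lt_of_le hji h), Adj0.mul_zero]
    · rw [hA.1 i k h, Adj0.zero_mul]
  · intro i j hij
    have hne : matMul A B i j ≠ Adj0.zero := by
      apply finSum_adj0_ne_zero _ i
      obtain ⟨s, hs⟩ := hA.2 i i le_rfl
      obtain ⟨t, ht⟩ := hB.2 i j hij
      rw [hs, ht, Adj0.elem_mul_elem]
      simp
    cases hc : matMul A B i j with
    | zero => exact absurd hc hne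
    | elem s => exact ⟨s, rfl⟩

/-- The multiplicative semigroup `UT_n(S)` of upper triangular matrices over `S⁰`. -/
def UTMat (S : Type u) (n : ℕ) : Type u := {A : MatSR (Adj0 S) n // IsUT A}

instance {S : Type*} [Add S] [Mul S] {n : ℕ} : Mul (UTMat S n) :=
  ⟨fun A B => ⟨matMul A.1 B.1, A.2.mul B.2⟩⟩

/-! ### `S^{01}`: adjoining a zero and an identity, and unitriangular matrices. -/

/-- `S` with a zero and a multiplicative identity adjoined (`S^{01}` in the paper).
The sum of `one` and an `elem` is left undefined in the paper; it is given an
arbitrary value here, and never arises in products of unitriangular matrices. -/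
inductive Adj01 (S : Type u) : Type u
  | zero : Adj01 S
  | one : Adj01 S
  | elem : S → Adj01 S

namespace Adj01

def add' {S : Type*} [Add S] : Adj01 S → Adj01 S → Adj01 S
  | .zero, b => b
  | a, .zero => a
  | .one, .one => .one
  | .one, .elem b => .elem b
  | .elem a, .one => .elem a
  | .elem a, .elem b => .elem (a + b)

def mul' {S : Type*} [Mul S] : Adj01 S → Adj01 S → Adj01 S
  | .zero, _ => .zero
  | _, .zero => .zero
  | .one, b => b
  | a, .one => a
  | .elem a, .elem b => .elem (a * b)

instance {S : Type*} [Add S] : Add (Adj01 S) := ⟨add'⟩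
instance {S : Type*} [Mul S] : Mul (Adj01 S) := ⟨mul'⟩

@[simp] lemma zero_add {S : Type*} [Add S] (b : Adj01 S) : (zero : Adj01 S) + b = b := by
  cases b <;> rfl
@[simp] lemma add_zero {S : Type*} [Add S] (a : Adj01 S) : a + (zero : Adj01 S) = a := by
  cases a <;> rfl
@[simp] lemma one_add_one {S : Type*} [Add S] : (one : Adj01 S) + one = one := rfl
@[simp] lemma elem_add_elem {S : Type*} [Add S] (a b : S) :
    (elem a : Adj01 S) + elem b = elem (a + b) := rfl
@[simp] lemma one_add_elem {S : Type*} [Add S] (b : S) :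
    (one : Adj01 S) + elem b = elem b := rfl
@[simp] lemma elem_add_one {S : Type*} [Add S] (a : S) :
    (elem a : Adj01 S) + one = elem a := rfl
@[simp] lemma zero_mul {S : Type*} [Mul S] (b : Adj01 S) : (zero : Adj01 S) * b = zero := by
  cases b <;> rfl
@[simp] lemma mul_zero {S : Type*} [Mul S] (a : Adj01 S) : a * (zero : Adj01 S) = zero := by
  cases a <;> rfl
@[simp] lemma one_mul {S : Type*} [Mul S] (b : Adj01 S) : (one : Adj01 S) * b = b := by
  cases b <;> rfl
@[simp] lemma mul_one {S : Type*} [Mul S] (a : Adj01 S) : a * (one : Adj01 S) = a := by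
  cases a <;> rfl
@[simp] lemma elem_mul_elem {S : Type*} [Mul S] (a b : S) :
    (elem a : Adj01 S) * elem b = elem (a * b) := rfl

lemma mul_ne_one {S : Type*} [Mul S] {a b : Adj01 S} (ha : a ≠ one) (hb : b ≠ one) :
    a * b ≠ one := by
  cases a <;> cases b <;> simp_all

lemma add_ne_one {S : Type*} [Add S] {a b : Adj01 S} (ha : a ≠ one) (hb : b ≠ one) :
    a + b ≠ one := by
  cases a <;> cases b <;> simp_all

lemma add_01 {S : Type*} [Add S] {a b : Adj01 S} (ha : a = zero ∨ a = one)
    (hb : b = zero ∨ b = one) :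
    (a + b = zero ∨ a + b = one) ∧ (a + b = one ↔ a = one ∨ b = one) := by
  rcases ha with rfl | rfl <;> rcases hb with rfl | rfl <;> simp

end Adj01

lemma foldl_optStep_adj01 {S : Type*} [Add S] (l : List (Adj01 S)) (a : Adj01 S)
    (ha : a = Adj01.zero ∨ a = Adj01.one) (hl : ∀ x ∈ l, x = Adj01.zero ∨ x = Adj01.one) :
    ∃ c : Adj01 S, l.foldl (optStep (· + ·)) (some a) = some c ∧
      (c = Adj01.zero ∨ c = Adj01.one) ∧
      (c = Adj01.one ↔ a = Adj01.one ∨ ∃ x ∈ l, x = Adj01.one) := by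
  induction l generalizing a with
  | nil => exact ⟨a, rfl, ha, by simp⟩
  | cons x l ih =>
    have hx := hl x (by simp)
    have key := Adj01.add_01 ha hx
    obtain ⟨c, hc, hc01, hiff⟩ := ih (a + x) key.1 (fun y hy => hl y (by simp [hy]))
    refine ⟨c, by simpa [optStep] using hc, hc01, ?_⟩
    rw [hiff, key.2]
    simp only [List.mem_cons, exists_eq_or_imp]
    tauto

lemma foldl_optStep_adj01_ne_one {S : Type*} [Add S] (l : List (Adj01 S)) (a : Adj01 S)
    (ha : a ≠ Adj01.one) (hl : ∀ x ∈ l, x ≠ Adj01.one) :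
    ∃ c : Adj01 S, l.foldl (optStep (· + ·)) (some a) = some c ∧ c ≠ Adj01.one := by
  induction l generalizing a with
  | nil => exact ⟨a, rfl, ha⟩
  | cons x l ih =>
    have hax : a + x ≠ Adj01.one := Adj01.add_ne_one ha (hl x (by simp))
    obtain ⟨c, hc, hcne⟩ := ih (a + x) hax (fun y hy => hl y (by simp [hy]))
    exact ⟨c, by simpa [optStep] using hc, hcne⟩

lemma finSum_adj01_eq_one {S : Type*} [Add S] {n : ℕ} (f : Fin n → Adj01 S) (i : Fin n)
    (d : Adj01 S) (h01 : ∀ k, f k = Adj01.zero ∨ f k = Adj01.one) (hi : f i = Adj01.one) :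
    (finSum f).getD d = Adj01.one := by
  cases n with
  | zero => exact i.elim0
  | succ m =>
    rw [finSum, List.ofFn_succ, List.foldl_cons]
    obtain ⟨c, hc, _, hiff⟩ := foldl_optStep_adj01 (List.ofFn fun i : Fin m => f i.succ) (f 0)
      (h01 0) (by
        intro x hx
        rw [List.mem_ofFn] at hx
        obtain ⟨j, rfl⟩ := hx
        exact h01 _)
    rw [show optStep (· + ·) none (f 0) = some (f 0) from rfl, hc]
    simp only [Option.getD_some]
    apply hiff.mpr
    induction i using Fin.cases with
    | zero => exact Or.inl hi
    | succ j => exact Or.inr ⟨f j.succ, List.mem_ofFn.mpr ⟨j, rfl⟩, hi⟩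

lemma finSum_adj01_eq_zero {S : Type*} [Add S] {n : ℕ} (f : Fin n → Adj01 S) (i : Fin n)
    (d : Adj01 S) (h : ∀ k, f k = Adj01.zero) : (finSum f).getD d = Adj01.zero := by
  cases n with
  | zero => exact i.elim0
  | succ m =>
    rw [finSum, List.ofFn_succ, List.foldl_cons]
    obtain ⟨c, hc, hc01, hiff⟩ := foldl_optStep_adj01 (List.ofFn fun i : Fin m => f i.succ)
      (f 0) (Or.inl (h 0)) (by
        intro x hx
        rw [List.mem_ofFn] at hx
        obtain ⟨j, rfl⟩ := hx
        exact Or.inl (h _))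
    rw [show optStep (· + ·) none (f 0) = some (f 0) from rfl, hc]
    simp only [Option.getD_some]
    rcases hc01 with h' | h'
    · exact h'
    · exfalso
      rcases hiff.mp h' with h'' | ⟨x, hx, hx1⟩
      · rw [h 0] at h''; cases h''
      · rw [List.mem_ofFn] at hx
        obtain ⟨j, rfl⟩ := hx
        rw [h _] at hx1; cases hx1

lemma finSum_adj01_ne_one {S : Type*} [Add S] {n : ℕ} (f : Fin n → Adj01 S) (i : Fin n)
    (d : Adj01 S) (h : ∀ k, f k ≠ Adj01.one) : (finSum f).getD d ≠ Adj01.one := by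
  cases n with
  | zero => exact i.elim0
  | succ m =>
    rw [finSum, List.ofFn_succ, List.foldl_cons]
    obtain ⟨c, hc, hcne⟩ := foldl_optStep_adj01_ne_one (List.ofFn fun i : Fin m => f i.succ)
      (f 0) (h 0) (by
        intro x hx
        rw [List.mem_ofFn] at hx
        obtain ⟨j, rfl⟩ := hx
        exact h _)
    rw [show optStep (· + ·) none (f 0) = some (f 0) from rfl, hc]
    simpa using hcne

/-- Unitriangularity over `S^{01}`: the adjoined zero strictly below the diagonal, the
adjoined identity on the diagonal, and entries of `S⁰` (i.e. anything except the
adjoined identity) strictly above the diagonal. -/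
def IsU {S : Type*} {n : ℕ} (A : MatSR (Adj01 S) n) : Prop :=
  (∀ i j : Fin n, (j : ℕ) < (i : ℕ) → A i j = Adj01.zero) ∧
  (∀ i : Fin n, A i i = Adj01.one) ∧
  (∀ i j : Fin n, (i : ℕ) < (j : ℕ) → A i j ≠ Adj01.one)

lemma IsU.mul {S : Type*} [Add S] [Mul S] {n : ℕ} {A B : MatSR (Adj01 S) n}
    (hA : IsU A) (hB : IsU B) : IsU (matMul A B) := by
  refine ⟨?_, ?_, ?_⟩
  · intro i j hji
    apply finSum_adj01_eq_zero _ i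
    intro k
    rcases le_or_gt (i : ℕ) (k : ℕ) with h | h
    · rw [hB.1 k j (lt_of_lt_of_le hji h), Adj01.mul_zero]
    · rw [hA.1 i k h, Adj01.zero_mul]
  · intro i
    apply finSum_adj01_eq_one _ i
    · intro k
      rcases lt_trichotomy (k : ℕ) (i : ℕ) with h | h | h
      · rw [hA.1 i k h, Adj01.zero_mul]; exact Or.inl rfl
      · have : k = i := Fin.ext h
        subst this
        rw [hA.2.1 k, hB.2.1 k, Adj01.one_mul]; exact Or.inr rfl
      · rw [hB.1 k i h, Adj01.mul_zero]; exact Or.inl rfl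
    · rw [hA.2.1 i, hB.2.1 i, Adj01.one_mul]
  · intro i j hij
    apply finSum_adj01_ne_one _ i
    intro k
    rcases lt_trichotomy (k : ℕ) (i : ℕ) with h | h | h
    · rw [hA.1 i k h, Adj01.zero_mul]; exact fun h => by cases h
    · have : k = i := Fin.ext h
      subst this
      rw [hA.2.1 k, Adj01.one_mul]
      exact hB.2.2 k j (by omega)
    · rcases lt_trichotomy (k : ℕ) (j : ℕ) with h' | h' | h'
      · exact Adj01.mul_ne_one (hA.2.2 i k h) (hB.2.2 k j h')
      · have : k = j := Fin.ext h'
        subst this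
        rw [hB.2.1 k, Adj01.mul_one]
        exact hA.2.2 i k h
      · rw [hB.1 k j h', Adj01.mul_zero]; exact fun h => by cases h

/-- The multiplicative monoid `U_n(S)` of unitriangular matrices over `S^{01}`. -/
def UMat (S : Type u) (n : ℕ) : Type u := {A : MatSR (Adj01 S) n // IsU A}

instance {S : Type*} [Add S] [Mul S] {n : ℕ} : Mul (UMat S n) :=
  ⟨fun A B => ⟨matMul A.1 B.1, A.2.mul B.2⟩⟩

/-! ### Monogenic subsemirings. -/

/-- The carrier of the monogenic subsemiring `⟨a⟩` generated by `a` is the set of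
positive powers of `a`; in a bipotent semiring it is closed under addition. -/
instance genAdd {S : Type*} [BipotentSemiring S] (a : S) : Add ↥(Set.range (mpow a)) :=
  ⟨fun p q => ⟨p.1 + q.1, by
    rcases BipotentSemiring.bipotent p.1 q.1 with h | h <;> rw [h]
    exacts [p.2, q.2]⟩⟩

instance genMul {S : Type*} [BipotentSemiring S] (a : S) : Mul ↥(Set.range (mpow a)) :=
  ⟨fun p q => ⟨p.1 * q.1, by
    obtain ⟨m, hm⟩ := p.2
    obtain ⟨n, hn⟩ := q.2
    exact ⟨m + n + 1, by rw [← hm, ← hn, mpow_mul_mpow]⟩⟩⟩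

/-! ### Concrete bipotent semirings. -/

/-- The tropical semiring `ℕ_max` of positive natural numbers: addition is `max`,
multiplication is ordinary addition. -/
def NMax : Type := {n : ℕ // 0 < n}

instance : Add NMax := ⟨fun a b => ⟨max a.1 b.1, by have := a.2; have := b.2; omega⟩⟩
instance : Mul NMax := ⟨fun a b => ⟨a.1 + b.1, by have := a.2; have := b.2; omega⟩⟩

/-- The tropical semiring `(-ℕ)_max` of negative integers: addition is `max`,
multiplication is ordinary addition. -/
def NegNMax : Type := {z : ℤ // z < 0}

instance : Add NegNMax := ⟨fun a b => ⟨max a.1 b.1, by have := a.2; have := b.2; omega⟩⟩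
instance : Mul NegNMax := ⟨fun a b => ⟨a.1 + b.1, by have := a.2; have := b.2; omega⟩⟩

/-- The truncated tropical semiring `[k]_max` on `{1,…,k}`: addition is `max`,
multiplication is `a·b = min (a+b) k`. -/
def KMax (k : ℕ) : Type := {n : ℕ // 0 < n ∧ n ≤ k}

instance {k : ℕ} : Add (KMax k) :=
  ⟨fun a b => ⟨max a.1 b.1, by have := a.2; have := b.2; omega⟩⟩
instance {k : ℕ} : Mul (KMax k) :=
  ⟨fun a b => ⟨min (a.1 + b.1) k, by have := a.2; have := b.2; omega⟩⟩

/-- The truncated tropical semiring `[-k]_max` on `{-k,…,-1}`: addition is `max`,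
multiplication is `a·b = max (a+b) (-k)`. -/
def NegKMax (k : ℕ) : Type := {z : ℤ // -(k : ℤ) ≤ z ∧ z ≤ -1}

instance {k : ℕ} : Add (NegKMax k) :=
  ⟨fun a b => ⟨max a.1 b.1, by have := a.2; have := b.2; omega⟩⟩
instance {k : ℕ} : Mul (NegKMax k) :=
  ⟨fun a b => ⟨max (a.1 + b.1) (-(k : ℤ)), by have := a.2; have := b.2; omega⟩⟩

/-- The two-element boolean semifield `𝔹`: `{0,1}` with `0 < 1`, addition `max` (= "or")
and the usual multiplication (= "and"). -/
def BoolSR : Type := Bool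

instance : Add BoolSR := ⟨fun a b => (Bool.or a b : Bool)⟩
instance : Mul BoolSR := ⟨fun a b => (Bool.and a b : Bool)⟩

/-- A chain semiring: a linearly ordered set with addition `max` and multiplication `min`. -/
def ChainSR (L : Type u) [LinearOrder L] : Type u := L

instance {L : Type u} [LinearOrder L] : Add (ChainSR L) := ⟨fun a b => (max a b : L)⟩
instance {L : Type u} [LinearOrder L] : Mul (ChainSR L) := ⟨fun a b => (min a b : L)⟩

/-- The three-element commutative bipotent semiring of Proposition 1: order `A < B < C`
(addition is `max`), every element multiplicatively idempotent, and all products of two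
distinct elements equal to `B`. -/
inductive Three : Type
  | A : Three
  | B : Three
  | C : Three
deriving DecidableEq

instance : Fintype Three := ⟨{Three.A, Three.B, Three.C}, fun x => by cases x <;> simp⟩

def Three.add' : Three → Three → Three
  | .A, y => y
  | x, .A => x
  | .B, y => y
  | x, .B => x
  | .C, .C => .C

def Three.mul' : Three → Three → Three
  | .A, .A => .A
  | .B, .B => .B
  | .C, .C => .C
  | _, _ => .B

instance : Add Three := ⟨Three.add'⟩
instance : Mul Three := ⟨Three.mul'⟩

instance : CommBipotentSemiring Three where
  nonempty' := ⟨Three.A⟩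
  add_assoc' := by decide
  add_comm' := by decide
  mul_assoc' := by decide
  left_distrib' := by decide
  right_distrib' := by decide
  bipotent := by decide
  mul_comm' := by decide

/-- A bundled (possibly zero-less and identity-less) semiring, used to quantify over
semirings inside hypotheses. -/
structure BundledSemiring : Type 1 where
  carrier : Type
  add : carrier → carrier → carrier
  mul : carrier → carrier → carrier
  nonempty' : Nonempty carrier
  add_assoc' : ∀ a b c, add (add a b) c = add a (add b c)
  add_comm' : ∀ a b, add a b = add b a
  mul_assoc' : ∀ a b c, mul (mul a b) c = mul a (mul b c)
  left_distrib' : ∀ a b c, mul a (add b c) = add (mul a b) (mul a c)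
  right_distrib' : ∀ a b c, mul (add a b) c = add (mul a c) (mul b c)

/-! ### Semifields. -/

/-- `z` is a zero element: additively neutral and multiplicatively absorbing. -/
def IsZeroElem {S : Type*} [Add S] [Mul S] (z : S) : Prop :=
  ∀ x : S, z + x = x ∧ x + z = x ∧ z * x = z ∧ x * z = z

/-- `S` is a semifield: a commutative semiring, possibly without zero, whose set of
non-zero elements forms a group under multiplication (with identity `e`). -/
def IsSemifield (S : Type*) [Add S] [Mul S] : Prop :=
  ∃ e : S, ¬ IsZeroElem e ∧
    (∀ x : S, ¬ IsZeroElem x → e * x = x ∧ x * e = x) ∧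
    (∀ x y : S, ¬ IsZeroElem x → ¬ IsZeroElem y → ¬ IsZeroElem (x * y)) ∧
    (∀ x : S, ¬ IsZeroElem x → ∃ y : S, ¬ IsZeroElem y ∧ x * y = e ∧ y * x = e)

/-! ### Truncated tropical semirings. -/

/-- The underlying set `[x,y] ∪ {0}` of the truncated tropical semiring `𝕋_{[x,y]}`
(without the zero element `-∞`), for `0 ≤ x`.  Addition is `max`; multiplication is
`y`-truncated addition `a ⊗ b = min (a+b) y`, with the element `0` acting as the
multiplicative identity. -/
def TTb (x y : ℝ) (_hx : 0 ≤ x) : Type := {r : ℝ // r = 0 ∨ (x ≤ r ∧ r ≤ y)}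

namespace TTb

protected def add {x y : ℝ} {hx : 0 ≤ x} (a b : TTb x y hx) : TTb x y hx :=
  ⟨max a.1 b.1, by rcases max_choice a.1 b.1 with h | h <;> rw [h]
                   exacts [a.2, b.2]⟩

protected noncomputable def mul {x y : ℝ} {hx : 0 ≤ x} (a b : TTb x y hx) : TTb x y hx :=
  if ha : a.1 = 0 then b else if hb : b.1 = 0 then a else
    ⟨min (a.1 + b.1) y, by
      rcases a.2 with h | h
      · exact absurd h ha
      rcases b.2 with h' | h'
      · exact absurd h' hb
      right
      exact ⟨le_min (by linarith [h.1, h'.1]) (by linarith [h.1, h.2]), min_le_right _ _⟩⟩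

instance {x y : ℝ} {hx : 0 ≤ x} : Add (TTb x y hx) := ⟨TTb.add⟩
noncomputable instance {x y : ℝ} {hx : 0 ≤ x} : Mul (TTb x y hx) := ⟨TTb.mul⟩

end TTb

/-- The truncated tropical semiring `𝕋_{[x,y]}` (for `0 ≤ x < y`): the real interval
`[x,y]` together with a multiplicative identity `0` and a zero `-∞`, with addition
`max` and multiplication the `y`-truncated addition `a ⊗ b = min (a+b) y`. -/
abbrev TT (x y : ℝ) (hx : 0 ≤ x) : Type := Adj0 (TTb x y hx)

/-- The multiplicative identity `0` of `𝕋_{[x,y]}`. -/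
noncomputable def ttId (x y : ℝ) (hx : 0 ≤ x) : TT x y hx := Adj0.elem ⟨0, Or.inl rfl⟩

lemma ttId_mul {x y : ℝ} {hx : 0 ≤ x} (b : TT x y hx) : ttId x y hx * b = b := by
  cases b with
  | zero => rfl
  | elem e =>
    show Adj0.elem (TTb.mul ⟨0, Or.inl rfl⟩ e) = Adj0.elem e
    first | (unfold TTb.mul; rw [dif_pos rfl]) | simp [TTb.mul]

/-- The subsemigroup `S` of `M_2(𝕋_{[1,z]})` of matrices of the form `[[0,a],[-∞,b]]`. -/
noncomputable def UpperS (z : ℝ) (hz : (0:ℝ) ≤ 1) : Type :=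
  {A : MatSR (TT 1 z hz) 2 // A 0 0 = ttId 1 z hz ∧ A 1 0 = Adj0.zero}

/-- The subsemigroup `S'` of `M_2(𝕋_{[1,z]})` of matrices of the form `[[0,-∞],[a,b]]`. -/
noncomputable def LowerS (z : ℝ) (hz : (0:ℝ) ≤ 1) : Type :=
  {A : MatSR (TT 1 z hz) 2 // A 0 0 = ttId 1 z hz ∧ A 0 1 = Adj0.zero}

noncomputable instance {z : ℝ} {hz : (0:ℝ) ≤ 1} : Mul (UpperS z hz) :=
  ⟨fun A B => ⟨A.1 * B.1, by
    obtain ⟨hA1, hA2⟩ := A.2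
    obtain ⟨hB1, hB2⟩ := B.2
    constructor
    · show A.1 0 0 * B.1 0 0 + A.1 0 1 * B.1 1 0 = ttId 1 z hz
      rw [hA1, hB1, hB2, ttId_mul, Adj0.mul_zero, Adj0.add_zero]
    · show A.1 1 0 * B.1 0 0 + A.1 1 1 * B.1 1 0 = Adj0.zero
      rw [hA2, hB2, Adj0.zero_mul, Adj0.mul_zero, Adj0.add_zero]⟩⟩

noncomputable instance {z : ℝ} {hz : (0:ℝ) ≤ 1} : Mul (LowerS z hz) :=
  ⟨fun A B => ⟨A.1 * B.1, by
    obtain ⟨hA1, hA2⟩ := A.2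
    obtain ⟨hB1, hB2⟩ := B.2
    constructor
    · show A.1 0 0 * B.1 0 0 + A.1 0 1 * B.1 1 0 = ttId 1 z hz
      rw [hA1, hB1, hA2, ttId_mul, Adj0.zero_mul, Adj0.add_zero]
    · show A.1 0 0 * B.1 0 1 + A.1 0 1 * B.1 1 1 = Adj0.zero
      rw [hA1, hB2, hA2, ttId_mul, Adj0.zero_mul, Adj0.add_zero]⟩⟩

/-!
Identify `S` with the matrices `[[1,a],[0,b]]` over the commutative semiring `𝕋_{[1,z]}`, and `S'`
with the opposite monoid via transposition. For three such matrices `X, Y, T` one has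
`X Y T = Y X T` when the lower-right entries of `X` and `Y` are both the unit `0` of `𝕋`, or when
both are absorbed by the lower-right entry of `T`. Given `k ≥ 2⌈z⌉ + 4` factors with lower-right
entries `b₀, …, b_{k-1}`: if some `b_j` with `j ≥ 2` is `-∞`, the first two factors can be swapped;
if two adjacent `b_j` are `0`, those two can be swapped; otherwise any two adjacent `b_j` have sum
at least `1`, so `b₄ ⋯ b_{k-1}` reaches the top element `z`, which absorbs `b₂` and `b₃`, and the
factors at positions 2 and 3 can be swapped.
-/

@[to_additive]
lemma foldl_optStep_mul {M : Type*} [Monoid M] (l : List M) (a : M) :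
    l.foldl (optStep (· * ·)) (some a) = some (a * l.prod) := by
  induction l generalizing a with
  | nil => simp
  | cons b t ih => simp [optStep, ih, mul_assoc]

lemma finProd_eq_some_prod {M : Type*} [Monoid M] {k : ℕ} (s : Fin (k + 1) → M) :
    finProd s = some (List.ofFn s).prod := by
  rw [finProd, List.ofFn_succ, List.foldl_cons]
  exact (foldl_optStep_mul _ (s 0)).trans (by rw [List.prod_cons])

lemma finSum_eq_some_sum {R : Type*} [AddCommMonoid R] {k : ℕ} (f : Fin (k + 1) → R) :
    finSum f = some (∑ i, f i) := by
  rw [finSum, List.ofFn_succ, List.foldl_cons]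
  exact (foldl_optStep_add _ (f 0)).trans (by rw [Fin.sum_univ_succ, List.sum_ofFn])

lemma finProd_eq_finProd_of_prod_eq {M : Type*} [Monoid M] {k : ℕ} {s t : Fin k → M}
    (h : (List.ofFn s).prod = (List.ofFn t).prod) : finProd s = finProd t := by
  cases k with
  | zero => rfl
  | succ k => rw [finProd_eq_some_prod, finProd_eq_some_prod, h]

lemma foldl_optStep_map {α β : Type*} [Mul α] [Mul β] (f : α →ₙ* β) (l : List α)
    (o : Option α) :
    (l.map f).foldl (optStep (· * ·)) (o.map f) = (l.foldl (optStep (· * ·)) o).map f := by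
  induction l generalizing o with
  | nil => rfl
  | cons a t ih => cases o <;> simp [optStep, ← ih]

lemma finProd_map {α β : Type*} [Mul α] [Mul β] (f : α →ₙ* β) {k : ℕ} (s : Fin k → α) :
    finProd (fun i => f (s i)) = (finProd s).map f := by
  rw [finProd, finProd, ← foldl_optStep_map, List.map_ofFn]
  rfl

lemma List.reverse_ofFn {α : Type*} {n : ℕ} (f : Fin n → α) :
    (List.ofFn f).reverse = List.ofFn fun i => f i.rev := by
  apply List.ext_getElem (by simp)
  intro i h₁ h₂
  simp only [List.getElem_reverse, List.getElem_ofFn, List.length_ofFn]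
  congr 1
  ext
  simp at h₂ ⊢
  omega

lemma List.prod_eq_prod_take_mul {M : Type*} [Monoid M] (l : List M) {p : ℕ}
    (hp : p + 1 < l.length) :
    l.prod = (l.take p).prod * (l[p] * l[p + 1] * (l.drop (p + 2)).prod) := by
  rw [← List.prod_take_mul_prod_drop l p, List.drop_eq_getElem_cons (by omega),
    List.drop_eq_getElem_cons hp, List.prod_cons, List.prod_cons, mul_assoc l[p]]

lemma List.prod_ofFn_swap {M : Type*} [Monoid M] {k : ℕ} (s : Fin k → M) {p : ℕ}
    (hp : p + 1 < k)
    (h : s ⟨p, by omega⟩ * s ⟨p + 1, hp⟩ * ((List.ofFn s).drop (p + 2)).prod =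
      s ⟨p + 1, hp⟩ * s ⟨p, by omega⟩ * ((List.ofFn s).drop (p + 2)).prod) :
    (List.ofFn fun i => s (Equiv.swap ⟨p, by omega⟩ ⟨p + 1, hp⟩ i)).prod =
      (List.ofFn s).prod := by
  set σ := Equiv.swap (⟨p, by omega⟩ : Fin k) ⟨p + 1, hp⟩
  have hσ : ∀ i : Fin k, (i : ℕ) ≠ p → (i : ℕ) ≠ p + 1 → σ i = i := fun i h₁ h₂ =>
    Equiv.swap_apply_of_ne_of_ne (by simpa [Fin.ext_iff]) (by simpa [Fin.ext_iff])
  have htake : (List.ofFn fun i => s (σ i)).take p = (List.ofFn s).take p := by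
    apply List.ext_getElem (by simp)
    intro i h₁ h₂
    simp only [List.getElem_take, List.getElem_ofFn]
    rw [hσ] <;> simp at h₁ ⊢ <;> omega
  have hdrop : (List.ofFn fun i => s (σ i)).drop (p + 2) = (List.ofFn s).drop (p + 2) := by
    apply List.ext_getElem (by simp)
    intro i h₁ h₂
    simp only [List.getElem_drop, List.getElem_ofFn]
    rw [hσ] <;> simp <;> omega
  rw [List.prod_eq_prod_take_mul (List.ofFn fun i => s (σ i)) (p := p) (by simpa),
    List.prod_eq_prod_take_mul (List.ofFn s) (p := p) (by simpa), htake,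
    hdrop]
  simp [σ, h]

def KPermutableOn {M : Type*} [Monoid M] (S : Set M) (k : ℕ) : Prop :=
  ∀ s : Fin k → M, (∀ i, s i ∈ S) → ∃ σ : Equiv.Perm (Fin k), σ ≠ Equiv.refl (Fin k) ∧
    (List.ofFn fun i => s (σ i)).prod = (List.ofFn s).prod

lemma kPermutable_of_injective {α M : Type*} [Mul α] [Monoid M] (f : α →ₙ* M)
    (hf : Function.Injective f) {S : Set M} (hS : ∀ a, f a ∈ S) {k : ℕ}
    (h : KPermutableOn S k) : KPermutable α k := by
  intro s
  obtain ⟨σ, hσ, hprod⟩ := h (fun i => f (s i)) fun i => hS _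
  refine ⟨σ, hσ, Option.map_injective hf ?_⟩
  rw [← finProd_map, ← finProd_map]
  exact finProd_eq_finProd_of_prod_eq hprod

lemma KPermutableOn.unop_preimage {M : Type*} [Monoid M] {S : Set M} {k : ℕ}
    (h : KPermutableOn S k) : KPermutableOn (MulOpposite.unop ⁻¹' S) k := by
  intro s hs
  obtain ⟨τ, hτ, hprod⟩ := h (fun i => (s i.rev).unop) fun i => hs _
  refine ⟨Fin.revPerm.trans (τ.trans Fin.revPerm), fun h' => hτ ?_, ?_⟩
  · exact Equiv.ext fun i => by simpa using Equiv.ext_iff.mp h' i.rev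
  · apply MulOpposite.unop_injective
    simp only [MulOpposite.unop_list_prod, List.map_ofFn, List.reverse_ofFn]
    simpa using hprod

namespace TTb

variable {x y : ℝ} {hx : 0 ≤ x}

instance : One (TTb x y hx) := ⟨⟨0, Or.inl rfl⟩⟩

@[simp] lemma val_one : (1 : TTb x y hx).1 = 0 := rfl

@[simp] lemma val_add (a b : TTb x y hx) : (a + b).1 = max a.1 b.1 := rfl

lemma val_mul (a b : TTb x y hx) :
    (a * b).1 = if a.1 = 0 then b.1 else if b.1 = 0 then a.1 else min (a.1 + b.1) y := by
  show (TTb.mul a b).1 = _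
  by_cases ha : a.1 = 0 <;> by_cases hb : b.1 = 0 <;> simp [TTb.mul, ha, hb]

instance : AddCommSemigroup (TTb x y hx) where
  add_assoc a b c := Subtype.ext (max_assoc a.1 b.1 c.1)
  add_comm a b := Subtype.ext (max_comm a.1 b.1)

noncomputable instance : CommMonoid (TTb x y hx) where
  mul_assoc a b c := by
    apply Subtype.ext
    rcases a.2 with ha | ⟨ha, ha'⟩ <;> rcases b.2 with hb | ⟨hb, hb'⟩ <;>
      rcases c.2 with hc | ⟨hc, hc'⟩ <;> simp only [val_mul] <;>
      simp only [min_def] <;> split_ifs <;> linarith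
  one_mul a := Subtype.ext (by simp [val_mul])
  mul_one a := Subtype.ext (by rw [val_mul]; split_ifs <;> simp_all)
  mul_comm a b := Subtype.ext (by
    simp only [val_mul]; split_ifs <;> first | linarith | rw [add_comm])

instance : LeftDistribClass (TTb x y hx) where
  left_distrib a b c := by
    apply Subtype.ext
    rcases a.2 with ha | ⟨ha, ha'⟩ <;> rcases b.2 with hb | ⟨hb, hb'⟩ <;>
      rcases c.2 with hc | ⟨hc, hc'⟩ <;> simp only [val_mul, val_add] <;>
      simp only [min_def, max_def] <;> split_ifs <;> linarith

end TTb

namespace Adj0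

variable {S : Type*} [AddCommSemigroup S] [CommMonoid S] [LeftDistribClass S]

instance : Zero (Adj0 S) := ⟨zero⟩

instance : One (Adj0 S) := ⟨elem 1⟩

/- For `S = TTb x y hx` the semiring `0` is `-∞` and the semiring `1` is the real number `0`. -/
instance : CommSemiring (Adj0 S) where
  add_assoc a b c := by cases a <;> cases b <;> cases c <;> simp [add_assoc]
  zero_add := zero_add
  add_zero := add_zero
  add_comm a b := by cases a <;> cases b <;> simp [add_comm]
  left_distrib a b c := by cases a <;> cases b <;> cases c <;> simp [mul_add]
  right_distrib a b c := by
    cases a <;> cases b <;> cases c <;> simp [mul_comm _ (_ : S), mul_add]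
  zero_mul := zero_mul
  mul_zero := mul_zero
  mul_assoc a b c := by cases a <;> cases b <;> cases c <;> simp [mul_assoc]
  one_mul a := by cases a; exacts [rfl, congrArg elem (one_mul _)]
  mul_one a := by cases a; exacts [rfl, congrArg elem (mul_one _)]
  mul_comm a b := by cases a <;> cases b <;> simp [mul_comm]
  nsmul := nsmulRec

instance : Nontrivial (Adj0 S) := ⟨⟨zero, elem 1, nofun⟩⟩

instance : NoZeroDivisors (Adj0 S) where
  eq_zero_or_eq_zero_of_mul_eq_zero {a b} h := by
    cases a <;> cases b <;> first | exact Or.inl rfl | exact Or.inr rfl | cases h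

end Adj0

theorem List.nsmul_le_sum_of_isChain {α : Type*} [AddCommMonoid α] [LinearOrder α]
    [IsOrderedAddMonoid α] {x : α} {l : List α} (hl : ∀ a ∈ l, 0 ≤ a)
    (hchain : l.IsChain (fun a b => x ≤ a + b)) {N : ℕ} (hN : 2 * N ≤ l.length) :
    N • x ≤ l.sum := by
  induction l using List.twoStepInduction generalizing N with
  | nil => simp_all
  | singleton a => obtain rfl : N = 0 := by simp at hN; omega
                   simpa using hl
  | cons_cons a b t ih _ =>
    rcases N with _ | N
    · simpa using List.sum_nonneg hl
    obtain ⟨hab, hbt⟩ := List.isChain_cons_cons.mp hchain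
    have ht := ih (fun c hc => hl c (by simp [hc])) hbt.tail (N := N) (by simp at hN; omega)
    rw [succ_nsmul', List.sum_cons, List.sum_cons, ← add_assoc]
    exact add_le_add hab ht

namespace TT

variable {x y : ℝ} {hx : 0 ≤ x}

/- `-∞` gets the junk value `0`. -/
def val : TT x y hx → ℝ
  | .zero => 0
  | .elem a => a.1

lemma val_nonneg (c : TT x y hx) : 0 ≤ val c := by
  rcases c with _ | ⟨a, ha | ha⟩
  exacts [le_rfl, ha.ge, hx.trans ha.1]

lemma val_le (hxy : x ≤ y) (c : TT x y hx) : val c ≤ y := by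
  rcases c with _ | ⟨a, ha | ha⟩
  exacts [hx.trans hxy, ha.le.trans (hx.trans hxy), ha.2]

lemma le_val {c : TT x y hx} (hc0 : c ≠ 0) (hc1 : c ≠ 1) : x ≤ val c := by
  rcases c with _ | ⟨a, ha | ha⟩
  · exact absurd rfl hc0
  · exact absurd (congrArg Adj0.elem (Subtype.ext ha)) hc1
  · exact ha.1

lemma eq_of_val_eq {c d : TT x y hx} (hc : c ≠ 0) (hd : d ≠ 0) (h : val c = val d) : c = d := by
  rcases c with _ | c <;> rcases d with _ | d
  · exact absurd rfl hc
  · exact absurd rfl hc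
  · exact absurd rfl hd
  · exact congrArg Adj0.elem (Subtype.ext h)

lemma val_mul (hxy : x ≤ y) {c d : TT x y hx} (hc : c ≠ 0) (hd : d ≠ 0) :
    val (c * d) = min (val c + val d) y := by
  rcases c with _ | c <;> rcases d with _ | d
  · exact absurd rfl hc
  · exact absurd rfl hc
  · exact absurd rfl hd
  have hc' : c.1 ≤ y := val_le hxy (.elem c)
  have hd' : d.1 ≤ y := val_le hxy (.elem d)
  show (c * d).1 = min (c.1 + d.1) y
  rw [TTb.val_mul]
  split_ifs with h1 h2
  · rw [h1, zero_add, min_eq_left hd']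
  · rw [h2, add_zero, min_eq_left hc']
  · rfl

lemma val_list_prod (hxy : x ≤ y) {l : List (TT x y hx)} (hl : 0 ∉ l) :
    val l.prod = min (l.map val).sum y := by
  induction l with
  | nil => exact (min_eq_left (hx.trans hxy)).symm
  | cons c t ih =>
    obtain ⟨hc, ht⟩ := not_or.mp (List.mem_cons.not.mp hl)
    rw [List.prod_cons, val_mul hxy (Ne.symm hc) (List.prod_ne_zero ht),
      ih ht, List.map_cons, List.sum_cons, ← min_add_add_left,
      min_assoc, min_eq_right (le_add_of_nonneg_left (val_nonneg c))]

lemma val_list_prod_of_isChain (hxy : x ≤ y) {N : ℕ} (hN : y ≤ N * x) {l : List (TT x y hx)}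
    (hl : 0 ∉ l) (hchain : l.IsChain (fun c d => c ≠ 1 ∨ d ≠ 1)) (hlen : 2 * N ≤ l.length) :
    val l.prod = y := by
  have hpair : (l.map val).IsChain (fun a b => x ≤ a + b) := by
    rw [List.isChain_map]
    refine hchain.imp_of_mem_imp fun c d hc hd h => ?_
    rcases h with h | h
    · linarith [le_val (ne_of_mem_of_not_mem hc hl) h, val_nonneg d]
    · linarith [le_val (ne_of_mem_of_not_mem hd hl) h, val_nonneg c]
  rw [val_list_prod hxy hl, min_eq_right]
  calc y ≤ N * x := hN
    _ = N • x := (nsmul_eq_mul N x).symm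
    _ ≤ (l.map val).sum :=
      List.nsmul_le_sum_of_isChain (by simpa using fun c _ => val_nonneg c) hpair (by simpa)

lemma mul_eq_right_of_val_eq (hxy : x ≤ y) {c d : TT x y hx} (hc : c ≠ 0) (hd : d ≠ 0)
    (hdy : val d = y) : c * d = d :=
  eq_of_val_eq (mul_ne_zero hc hd) hd <| by
    rw [val_mul hxy hc hd, hdy, min_eq_right (le_add_of_nonneg_left (val_nonneg c))]

theorem exists_adjacent_swappable (hxy : x ≤ y) {N : ℕ} (hN : y ≤ N * x)
    (l : List (TT x y hx)) (hlen : 2 * N + 4 ≤ l.length) :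
    ∃ p, ∃ hp : p + 1 < l.length,
      (l[p] * (l.drop (p + 2)).prod = (l.drop (p + 2)).prod ∧
        l[p + 1] * (l.drop (p + 2)).prod = (l.drop (p + 2)).prod) ∨
      (l[p] = 1 ∧ l[p + 1] = 1) := by
  by_cases h0 : 0 ∈ l.drop 2
  · exact ⟨0, by omega, Or.inl (by simp [List.prod_eq_zero h0])⟩
  by_cases hchain : l.IsChain (fun c d => c ≠ 1 ∨ d ≠ 1)
  · rw [List.drop_eq_getElem_cons (by omega), List.drop_eq_getElem_cons (by omega)] at h0
    simp only [List.mem_cons, not_or] at h0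
    obtain ⟨h2, h3, h4⟩ := h0
    have hB := val_list_prod_of_isChain hxy hN h4 (hchain.drop 4) (by simp; omega)
    exact ⟨2, by omega, Or.inl ⟨mul_eq_right_of_val_eq hxy (Ne.symm h2) (List.prod_ne_zero h4) hB,
      mul_eq_right_of_val_eq hxy (Ne.symm h3) (List.prod_ne_zero h4) hB⟩⟩
  · rw [List.isChain_iff_getElem] at hchain
    push Not at hchain
    obtain ⟨p, hp, h1, h2⟩ := hchain
    exact ⟨p, hp, Or.inr ⟨h1, h2⟩⟩

end TT

def upperSubmonoid (R : Type*) [Semiring R] : Submonoid (Matrix (Fin 2) (Fin 2) R) where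
  carrier := {M | M 0 0 = 1 ∧ M 1 0 = 0}
  mul_mem' {M N} hM hN := by
    simp_all [Matrix.mul_apply, Fin.sum_univ_two]
  one_mem' := by simp

namespace upperSubmonoid

variable {R : Type*} [Semiring R]

lemma list_prod_apply_one_one {l : List (Matrix (Fin 2) (Fin 2) R)}
    (hl : ∀ M ∈ l, M ∈ upperSubmonoid R) : l.prod 1 1 = (l.map (· 1 1)).prod := by
  induction l with
  | nil => simp
  | cons M t ih =>
    have hM := hl M List.mem_cons_self
    rw [List.prod_cons, Matrix.mul_apply, Fin.sum_univ_two, hM.2, zero_mul, zero_add,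
      ih fun N hN => hl N (List.mem_cons_of_mem M hN), List.map_cons, List.prod_cons]

lemma mul_mul_comm {X Y T : Matrix (Fin 2) (Fin 2) R} (hX : X ∈ upperSubmonoid R)
    (hY : Y ∈ upperSubmonoid R) (hT : T ∈ upperSubmonoid R)
    (h : (X 1 1 * T 1 1 = T 1 1 ∧ Y 1 1 * T 1 1 = T 1 1) ∨ (X 1 1 = 1 ∧ Y 1 1 = 1)) :
    X * Y * T = Y * X * T := by
  obtain ⟨hX₀, hX₁⟩ := hX
  obtain ⟨hY₀, hY₁⟩ := hY
  obtain ⟨hT₀, hT₁⟩ := hT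
  rcases h with ⟨hXT, hYT⟩ | ⟨hX, hY⟩
  · rw [Matrix.mul_assoc, Matrix.mul_assoc]
    ext i j
    fin_cases i <;> fin_cases j <;> simp [Matrix.mul_apply, Fin.sum_univ_two, *]
    exact add_right_comm _ _ _
  · congr 1
    ext i j
    fin_cases i <;> fin_cases j <;> simp [Matrix.mul_apply, Fin.sum_univ_two, *]
    exact add_comm _ _

end upperSubmonoid

theorem kPermutableOn_upperSubmonoid {x y : ℝ} {hx : 0 ≤ x} (hxy : x ≤ y) {N : ℕ}
    (hN : y ≤ N * x) {k : ℕ} (hk : 2 * N + 4 ≤ k) :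
    KPermutableOn (upperSubmonoid (TT x y hx) : Set (Matrix (Fin 2) (Fin 2) (TT x y hx))) k := by
  intro s hs
  obtain ⟨p, hp, h⟩ :=
    TT.exists_adjacent_swappable hxy hN (List.ofFn fun i => s i 1 1) (by simpa)
  rw [List.length_ofFn] at hp
  have htail : ∀ M ∈ (List.ofFn s).drop (p + 2), M ∈ upperSubmonoid (TT x y hx) := by
    intro M hM
    obtain ⟨i, rfl⟩ := List.mem_ofFn.mp (List.mem_of_mem_drop hM)
    exact hs i
  refine ⟨Equiv.swap ⟨p, by omega⟩ ⟨p + 1, hp⟩, by simp [Equiv.swap_eq_refl_iff],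
    List.prod_ofFn_swap s hp (upperSubmonoid.mul_mul_comm (hs _) (hs _)
      (Submonoid.list_prod_mem _ htail) ?_)⟩
  rw [upperSubmonoid.list_prod_apply_one_one htail]
  simpa [List.map_drop, List.map_ofFn, Function.comp_def] using h

lemma matMul_eq_mul {R : Type*} [NonUnitalNonAssocSemiring R] {n : ℕ} (A B : MatSR R n) :
    matMul A B = Matrix.of A * Matrix.of B := by
  funext i j
  cases n with
  | zero => exact i.elim0
  | succ n => rw [matMul, finSum_eq_some_sum]; rfl

section MatrixForms

variable (z : ℝ) (h : (0 : ℝ) ≤ 1)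

noncomputable def UpperS.toMatrix : UpperS z h →ₙ* Matrix (Fin 2) (Fin 2) (TT 1 z h) where
  toFun A := Matrix.of A.1
  map_mul' A B := matMul_eq_mul A.1 B.1

noncomputable def LowerS.toMatrix : LowerS z h →ₙ* (Matrix (Fin 2) (Fin 2) (TT 1 z h))ᵐᵒᵖ where
  toFun A := MulOpposite.op (Matrix.of A.1).transpose
  map_mul' A B := by
    rw [← MulOpposite.op_mul, ← Matrix.transpose_mul, ← matMul_eq_mul]
    rfl

lemma UpperS.toMatrix_injective : Function.Injective (UpperS.toMatrix z h) :=
  fun _ _ hAB => Subtype.ext (Matrix.of.injective hAB)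

lemma LowerS.toMatrix_injective : Function.Injective (LowerS.toMatrix z h) :=
  fun _ _ hAB => Subtype.ext (Matrix.of.injective (Matrix.transpose_injective
    (MulOpposite.op_injective hAB)))

lemma UpperS.toMatrix_mem (A : UpperS z h) : UpperS.toMatrix z h A ∈ upperSubmonoid _ := A.2

lemma LowerS.toMatrix_mem (A : LowerS z h) :
    (LowerS.toMatrix z h A).unop ∈ upperSubmonoid _ := A.2

end MatrixForms

/-- for real `z > 2`, the subsemigroups `S` and `S'` of
`M_2(𝕋_{[1,z]})` consisting of matrices of the form `[[0,a],[-∞,b]]`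
(resp. `[[0,-∞],[a,b]]`) are `(2⌈z⌉+5)`-permutable. -/
theorem stmt_17 (z : ℝ) (hz : 2 < z) :
    KPermutable (UpperS z zero_le_one) (2 * ⌈z⌉ + 5).toNat ∧
    KPermutable (LowerS z zero_le_one) (2 * ⌈z⌉ + 5).toNat := by
  have hceil : 0 < ⌈z⌉ := Int.ceil_pos.mpr (by linarith)
  have hN : z ≤ (⌈z⌉.toNat : ℕ) * 1 := by
    rw [mul_one]
    exact (Int.le_ceil z).trans (by exact_mod_cast Int.self_le_toNat ⌈z⌉)
  have hk : 2 * ⌈z⌉.toNat + 4 ≤ (2 * ⌈z⌉ + 5).toNat := by omega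
  have hS := kPermutableOn_upperSubmonoid (hx := zero_le_one) (by linarith) hN hk
  exact ⟨kPermutable_of_injective _ (UpperS.toMatrix_injective z _) (UpperS.toMatrix_mem z _) hS,
    kPermutable_of_injective _ (LowerS.toMatrix_injective z _) (LowerS.toMatrix_mem z _)
      hS.unop_preimage⟩
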